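/- arXiv:1203.1969 — 3 statements merged into one kernel-verified Lean document; each statement's English description precedes it below -/
import Mathlib

section
/- Let I be a squarefree monomial ideal in S = K[x₁,…,xₙ] over a field K. Then the following are equivalent: (1) I^(2) = I²; (2) whenever three minimal generators x^{H₁}, x^{H₂}, x^{H₃} of I make a special triangle (i.e., there are vertices i, j, k with H₁∩{i,j,k}={j,k}, H₂∩{i,j,k}={i,k}, H₃∩{i,j,k}={i,j}), the monomial x^{H₁∩H₂∩H₃}·x^{H₁∪H₂∪H₃} belongs to I². -/
open MvPolynomial CategoryTheory

/-- `Δ` is a simplicial complex on the vertex set `V`: it is closed under subsets,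
contains the empty face and contains every singleton. -/
def IsSimplicialComplex {V : Type} (Δ : Set (Finset V)) : Prop :=
  (∀ F ∈ Δ, ∀ G, G ⊆ F → G ∈ Δ) ∧ (∅ : Finset V) ∈ Δ ∧ ∀ v : V, ({v} : Finset V) ∈ Δ

/-- The Stanley–Reisner ideal of `Δ`: the ideal generated by the squarefree monomials
`∏_{i ∈ F} x_i` for the non-faces `F` of `Δ`. -/
noncomputable def SRIdeal (K : Type) [Field K] {V : Type} (Δ : Set (Finset V)) :
    Ideal (MvPolynomial V K) :=
  Ideal.span ((fun F : Finset V => ∏ i ∈ F, X i) '' {F | F ∉ Δ})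

/-- The irrelevant maximal ideal `m = (x_v : v ∈ V)` of the polynomial ring. -/
noncomputable def mxIdeal (K : Type) [Field K] (V : Type) : Ideal (MvPolynomial V K) :=
  Ideal.span (Set.range (X : V → MvPolynomial V K))

/-- The depth of the ideal `m` on the ring `A`: the supremum of the lengths of
regular sequences on `A` contained in `m`. -/
noncomputable def ringDepth (A : Type) [CommRing A] (m : Ideal A) : ℕ∞ :=
  sSup {d : ℕ∞ | ∃ rs : List A, (rs.length : ℕ∞) = d ∧ (∀ r ∈ rs, r ∈ m) ∧
    RingTheory.Sequence.IsRegular A rs}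

/-- `S ⧸ J` is Cohen–Macaulay: its depth (with respect to the image of the maximal
ideal `m`) equals its Krull dimension. -/
def IsCMQuot (S : Type) [CommRing S] (m J : Ideal S) : Prop :=
  ((ringDepth (S ⧸ J) (m.map (Ideal.Quotient.mk J)) : ℕ∞) : WithBot ℕ∞) = ringKrullDim (S ⧸ J)

/-- The second symbolic power of an ideal `I`: the intersection of `P ^ 2` over the
minimal primes `P` of `I`. -/
noncomputable def symb2 {S : Type} [CommRing S] (I : Ideal S) : Ideal S :=
  ⨅ P ∈ I.minimalPrimes, P ^ 2

/-- `Ext_A^i(A/m, A)`. -/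
noncomputable def extPow (A : Type) [CommRing A] (m : Ideal A) (i : ℕ) : ModuleCat A :=
  ((Ext A (ModuleCat A) i).obj (Opposite.op (ModuleCat.of A (A ⧸ m)))).obj (ModuleCat.of A A)

/-- `S ⧸ J` (with maximal ideal the image of `m`) is Gorenstein: it is Cohen–Macaulay and,
with `d = dim S/J` and `k = (S/J)/m` the residue field, the Bass numbers are those of a
Gorenstein ring: `Ext^i(k, S/J) = 0` for `i ≠ d` and `Ext^d(k, S/J) ≅ k`. -/
def IsGorQuot (S : Type) [CommRing S] (m J : Ideal S) : Prop :=
  IsCMQuot S m J ∧ ∃ d : ℕ, ((d : ℕ∞) : WithBot ℕ∞) = ringKrullDim (S ⧸ J) ∧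
    (∀ i : ℕ, i ≠ d → Subsingleton (extPow (S ⧸ J) (m.map (Ideal.Quotient.mk J)) i)) ∧
    Nonempty ((extPow (S ⧸ J) (m.map (Ideal.Quotient.mk J)) d) ≃ₗ[S ⧸ J]
      ((S ⧸ J) ⧸ (m.map (Ideal.Quotient.mk J))))

/-- `S ⧸ J` is quasi-Buchsbaum: `m` annihilates the local cohomology module
`H_m^i(S/J)` for all `i < dim S/J`. -/
def IsQuasiBuchsbaum (S : Type) [CommRing S] (m J : Ideal S) : Prop :=
  ∀ i : ℕ, ((i : ℕ∞) : WithBot ℕ∞) < ringKrullDim (S ⧸ J) →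
    ∀ r ∈ m, ∀ x : (localCohomology m i).obj (ModuleCat.of S (S ⧸ J)), r • x = 0

/-- `S ⧸ J` has finite local cohomology (FLC): the local cohomology module `H_m^i(S/J)`
has finite length (equivalently, is both Noetherian and Artinian) for all `i < dim S/J`. -/
def HasFLC (S : Type) [CommRing S] (m J : Ideal S) : Prop :=
  ∀ i : ℕ, ((i : ℕ∞) : WithBot ℕ∞) < ringKrullDim (S ⧸ J) →
    IsNoetherian S ((localCohomology m i).obj (ModuleCat.of S (S ⧸ J))) ∧
    IsArtinian S ((localCohomology m i).obj (ModuleCat.of S (S ⧸ J)))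

/-- Serre's condition `(S₂)`: for every prime `P` of `A`,
`depth A_P ≥ min (dim A_P) 2`. -/
def SerreS2 (A : Type) [CommRing A] : Prop :=
  ∀ (P : Ideal A) (hP : P.IsPrime),
    haveI := hP
    min (ringKrullDim (Localization.AtPrime P)) 2 ≤
      ((ringDepth (Localization.AtPrime P)
        (IsLocalRing.maximalIdeal (Localization.AtPrime P)) : ℕ∞) : WithBot ℕ∞)

/-- The link of a face `F` in `Δ`. -/
def linkOf {V : Type} [DecidableEq V] (Δ : Set (Finset V)) (F : Finset V) : Set (Finset V) :=
  {H | H ∈ Δ ∧ H ∩ F = ∅ ∧ H ∪ F ∈ Δ}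

/-- The 1-skeleton of the complex `Γ` (the graph on the vertices of `Γ` whose edges are the
1-dimensional faces of `Γ`) is connected of diameter at most 2: any two distinct vertices
are joined by a path of length at most 2. -/
def skeletonDiamLE2 {V : Type} [DecidableEq V] (Γ : Set (Finset V)) : Prop :=
  ∀ u v : V, ({u} : Finset V) ∈ Γ → ({v} : Finset V) ∈ Γ → u ≠ v →
    (({u, v} : Finset V) ∈ Γ ∨ ∃ w : V, ({u, w} : Finset V) ∈ Γ ∧ ({w, v} : Finset V) ∈ Γ)

/-- `linkOf Δ F` has dimension at least 1, i.e. it has a face with at least 2 vertices. -/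
def linkDimGE1 {V : Type} [DecidableEq V] (Δ : Set (Finset V)) (F : Finset V) : Prop :=
  ∃ H ∈ linkOf Δ F, 2 ≤ H.card

/-- The squarefree monomial ideal generated by the monomials `x^H = ∏_{a ∈ H} x_a`, `H ∈ E`. -/
noncomputable def sqfIdeal (K : Type) [Field K] {V : Type} (E : Set (Finset V)) :
    Ideal (MvPolynomial V K) :=
  Ideal.span ((fun H : Finset V => ∏ a ∈ H, X a) '' E)

/-- The edges `H₁, H₂, H₃` make the special triangle `{i, j, k}`. -/
def MakeSpecialTriangle {V : Type} [DecidableEq V] (H₁ H₂ H₃ : Finset V) (i j k : V) : Prop :=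
  i ≠ j ∧ j ≠ k ∧ i ≠ k ∧
  H₁ ∩ ({i, j, k} : Finset V) = {j, k} ∧
  H₂ ∩ ({i, j, k} : Finset V) = {i, k} ∧
  H₃ ∩ ({i, j, k} : Finset V) = {i, j}

/-!
For a vertex cover `C` of `E`, the ideal `P_C = (x_a : a ∈ C)` is a prime containing `I`, hence
contains a minimal prime of `I`; so every monomial `x^d` of an element of `I^(2)` has degree at
least 2 in the variables of `C`. Conversely, the triangle monomial lies in `P^2` for every prime
`P ⊇ I`, since `P` contains a variable of each of `x^{H₁}, x^{H₂}, x^{H₃}`.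

For the hard direction let `x^d` have degree `≥ 2` on every vertex cover and suppose no product
`x^{F₁} x^{F₂}` of generators divides it. Since the zeros of `d`, possibly together with one
vertex `w` with `d w = 1`, do not form a vertex cover, there are edges inside `supp d` (avoiding
`w`), and two such edges always share a vertex of multiplicity one in `d`. Take distinct edges
`H₁, H₂ ⊆ supp d` with the fewest common vertices of multiplicity one, such a vertex `w`, and an
edge `H₃ ⊆ supp d` avoiding `w`. Then `(H₁, H₃)` or `(H₂, H₃)` is a better pair, or
`H₁, H₂, H₃` make a special triangle, and the triangle condition yields edges `F₁ ≠ F₂` with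
`F₁ ∪ F₂ ⊆ H₁ ∪ H₂ ∪ H₃` and `F₁ ∩ F₂ ⊆ H₁ ∩ H₂ ∩ H₃`: again a better pair.
-/

open Pointwise

section

variable {σ : Type}

noncomputable def sqfExp (H : Finset σ) : σ →₀ ℕ := ∑ a ∈ H, Finsupp.single a 1

def IsVertexCover (E : Set (Finset σ)) (C : Finset σ) : Prop := ∀ H ∈ E, ¬Disjoint H C

section Hypergraph

open Finset

variable [DecidableEq σ]

theorem sqfExp_apply (H : Finset σ) (a : σ) : sqfExp H a = if a ∈ H then 1 else 0 := by
  simp [sqfExp, Finsupp.finsetSum_apply, Finsupp.single_apply]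

theorem sqfExp_add_sqfExp_le_iff {F₁ F₂ : Finset σ} {d : σ →₀ ℕ} :
    sqfExp F₁ + sqfExp F₂ ≤ d ↔ F₁ ∪ F₂ ⊆ d.support ∧ ∀ a ∈ F₁ ∩ F₂, 2 ≤ d a := by
  simp only [Finsupp.le_def, Finsupp.add_apply, sqfExp_apply, subset_iff, mem_union, mem_inter,
    Finsupp.mem_support_iff]
  grind

theorem sqfExp_add_sqfExp_le_sqfExp_add_sqfExp_iff {F₁ F₂ A B : Finset σ} (hAB : A ⊆ B) :
    sqfExp F₁ + sqfExp F₂ ≤ sqfExp A + sqfExp B ↔ F₁ ∪ F₂ ⊆ B ∧ F₁ ∩ F₂ ⊆ A := by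
  simp only [Finsupp.le_def, Finsupp.add_apply, sqfExp_apply, subset_iff, mem_union, mem_inter]
  grind

variable [Fintype σ] {E : Set (Finset σ)} {d : σ →₀ ℕ}

theorem exists_subset_support_disjoint (hcov : ∀ C, IsVertexCover E C → 2 ≤ ∑ a ∈ C, d a)
    {T : Finset σ} (hT : ∑ a ∈ T, d a ≤ 1) : ∃ H ∈ E, H ⊆ d.support ∧ Disjoint H T := by
  by_contra! h
  have hW : IsVertexCover E (T ∪ univ.filter (d · = 0)) := fun H hH hdisj =>
    h H hH (fun a ha => Finsupp.mem_support_iff.2 fun h0 =>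
      disjoint_left.1 hdisj ha (mem_union_right _ (by simpa using h0)))
      (hdisj.mono_right subset_union_left)
  have := hcov _ hW
  rw [← sum_subset subset_union_left fun a ha haT => by simpa [haT] using ha] at this
  omega

theorem exists_pair_subset_erase
    (hmin : ∀ H ∈ E, ∀ H' ∈ E, H ⊆ H' → H = H')
    (htri : ∀ H₁ ∈ E, ∀ H₂ ∈ E, ∀ H₃ ∈ E, ∀ i j k : σ, MakeSpecialTriangle H₁ H₂ H₃ i j k →
      ∃ F₁ ∈ E, ∃ F₂ ∈ E, F₁ ∪ F₂ ⊆ H₁ ∪ H₂ ∪ H₃ ∧ F₁ ∩ F₂ ⊆ H₁ ∩ H₂ ∩ H₃)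
    (hcov : ∀ C, IsVertexCover E C → 2 ≤ ∑ a ∈ C, d a)
    {H₁ H₂ : Finset σ} (h₁ : H₁ ∈ E) (h₂ : H₂ ∈ E) (hne : H₁ ≠ H₂) (hG : H₁ ∪ H₂ ⊆ d.support)
    {w : σ} (hw : w ∈ H₁ ∩ H₂) (hdw : d w = 1) :
    ∃ F₁ ∈ E, ∃ F₂ ∈ E, F₁ ≠ F₂ ∧ F₁ ∪ F₂ ⊆ d.support ∧ F₁ ∩ F₂ ⊆ (H₁ ∩ H₂).erase w := by
  obtain ⟨H₃, h₃, hH₃G, hwH₃⟩ := exists_subset_support_disjoint hcov (T := {w}) (by simp [hdw])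
  rw [disjoint_singleton_right] at hwH₃
  have hw₁ : w ∈ H₁ := (mem_inter.1 hw).1
  have hw₂ : w ∈ H₂ := (mem_inter.1 hw).2
  by_cases hj : H₁ ∩ H₃ ⊆ H₂
  · refine ⟨H₁, h₁, H₃, h₃, ne_of_mem_of_not_mem' hw₁ hwH₃,
      union_subset (subset_union_left.trans hG) hH₃G, fun a ha => ?_⟩
    grind
  by_cases hi : H₂ ∩ H₃ ⊆ H₁
  · refine ⟨H₂, h₂, H₃, h₃, ne_of_mem_of_not_mem' hw₂ hwH₃,
      union_subset (subset_union_right.trans hG) hH₃G, fun a ha => ?_⟩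
    grind
  obtain ⟨j, hj₁₃, hj₂⟩ := not_subset.1 hj
  obtain ⟨i, hi₂₃, hi₁⟩ := not_subset.1 hi
  have htriangle : MakeSpecialTriangle H₁ H₂ H₃ i j w := by
    unfold MakeSpecialTriangle
    grind
  obtain ⟨F₁, f₁, F₂, f₂, hFU, hFI⟩ := htri H₁ h₁ H₂ h₂ H₃ h₃ i j w htriangle
  refine ⟨F₁, f₁, F₂, f₂, ?_, hFU.trans (union_subset hG hH₃G), fun a ha => ?_⟩
  · rintro rfl
    have hF₁ : F₁ ⊆ H₁ ∩ H₂ ∩ H₃ := by simpa using hFI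
    exact hne ((hmin F₁ f₁ H₁ h₁ (hF₁.trans (by grind))).symm.trans
      (hmin F₁ f₁ H₂ h₂ (hF₁.trans (by grind))))
  · grind

theorem exists_sqfExp_add_sqfExp_le
    (hmin : ∀ H ∈ E, ∀ H' ∈ E, H ⊆ H' → H = H')
    (htri : ∀ H₁ ∈ E, ∀ H₂ ∈ E, ∀ H₃ ∈ E, ∀ i j k : σ, MakeSpecialTriangle H₁ H₂ H₃ i j k →
      ∃ F₁ ∈ E, ∃ F₂ ∈ E, F₁ ∪ F₂ ⊆ H₁ ∪ H₂ ∪ H₃ ∧ F₁ ∩ F₂ ⊆ H₁ ∩ H₂ ∩ H₃)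
    (hcov : ∀ C, IsVertexCover E C → 2 ≤ ∑ a ∈ C, d a) :
    ∃ F₁ ∈ E, ∃ F₂ ∈ E, sqfExp F₁ + sqfExp F₂ ≤ d := by
  by_contra! hfit
  have hmeet : ∀ F₁ ∈ E, ∀ F₂ ∈ E, F₁ ∪ F₂ ⊆ d.support → ∃ w ∈ F₁ ∩ F₂, d w = 1 := by
    intro F₁ f₁ F₂ f₂ hG
    have := hfit F₁ f₁ F₂ f₂
    rw [sqfExp_add_sqfExp_le_iff] at this
    push Not at this
    obtain ⟨w, hw, hlt⟩ := this hG
    have : d w ≠ 0 := Finsupp.mem_support_iff.1 (hG (inter_subset_union hw))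
    exact ⟨w, hw, by omega⟩
  let pairs := {p : Finset σ × Finset σ | p.1 ∈ E ∧ p.2 ∈ E ∧ p.1 ≠ p.2 ∧ p.1 ∪ p.2 ⊆ d.support}
  have hpairs : pairs.Nonempty := by
    obtain ⟨H, hH, hHG, -⟩ := exists_subset_support_disjoint hcov (T := ∅) (by simp)
    obtain ⟨w, hw, hdw⟩ := hmeet H hH H hH (by simpa using hHG)
    obtain ⟨H', hH', hH'G, hwH'⟩ :=
      exists_subset_support_disjoint hcov (T := {w}) (by simp [hdw])
    exact ⟨(H, H'), hH, hH', ne_of_mem_of_not_mem' (mem_inter.1 hw).1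
      (disjoint_singleton_right.1 hwH'), union_subset hHG hH'G⟩
  obtain ⟨⟨H₁, H₂⟩, ⟨h₁, h₂, hne, hG⟩, hleast⟩ := Set.exists_min_image pairs
    (fun p => #((p.1 ∩ p.2).filter (d · = 1))) pairs.toFinite hpairs
  obtain ⟨w, hw, hdw⟩ := hmeet H₁ h₁ H₂ h₂ hG
  obtain ⟨F₁, f₁, F₂, f₂, hF, hFG, hFH⟩ :=
    exists_pair_subset_erase hmin htri hcov h₁ h₂ hne hG hw hdw
  have hlt : #((F₁ ∩ F₂).filter (d · = 1)) < #((H₁ ∩ H₂).filter (d · = 1)) :=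
    calc #((F₁ ∩ F₂).filter (d · = 1)) ≤ #(((H₁ ∩ H₂).filter (d · = 1)).erase w) := by
          rw [← filter_erase]
          exact card_le_card (filter_subset_filter _ hFH)
      _ < _ := card_erase_lt_of_mem (mem_filter.2 ⟨hw, hdw⟩)
  exact (hleast (F₁, F₂) ⟨f₁, f₂, hF, hFG⟩).not_gt hlt

end Hypergraph

theorem symb2_le_sq {S : Type} [CommRing S] {I P : Ideal S} [P.IsPrime] (hIP : I ≤ P) :
    symb2 I ≤ P ^ 2 := by
  obtain ⟨Q, hQ, hQP⟩ := Ideal.exists_minimalPrimes_le hIP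
  exact (iInf₂_le Q hQ).trans (Ideal.pow_right_mono hQP 2)

theorem sq_le_symb2 {S : Type} [CommRing S] (I : Ideal S) : I ^ 2 ≤ symb2 I :=
  le_iInf₂ fun _ hP => Ideal.pow_right_mono hP.1.2 2

namespace MvPolynomial

variable {R : Type*}

section Semiring

variable [CommSemiring R]

theorem prod_X_eq_monomial_sqfExp (H : Finset σ) :
    ∏ a ∈ H, (X a : MvPolynomial σ R) = monomial (sqfExp H) 1 :=
  (monomial_sum_one H _).symm

theorem span_monomial_image_mul_span_monomial_image (A B : Set (σ →₀ ℕ)) :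
    Ideal.span ((fun u => monomial u (1 : R)) '' A) * Ideal.span ((fun u => monomial u 1) '' B) =
      Ideal.span ((fun u => monomial u 1) '' (A + B)) := by
  rw [Ideal.span_mul_span']
  congr 1
  ext
  simp [Set.mem_mul, Set.mem_add, monomial_mul]

theorem two_le_sum_of_mem_span_X_image_sq {C : Finset σ} {f : MvPolynomial σ R}
    (hf : f ∈ Ideal.span (X '' (C : Set σ)) ^ 2) (d : σ →₀ ℕ) (hd : d ∈ f.support) :
    2 ≤ ∑ a ∈ C, d a := by
  classical
  have hX : X '' (C : Set σ) = (fun u => monomial u (1 : R)) '' ((Finsupp.single · 1) '' C) := by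
    rw [Set.image_image]; rfl
  rw [hX, sq, span_monomial_image_mul_span_monomial_image, mem_ideal_span_monomial_image] at hf
  obtain ⟨_, ⟨_, ⟨a, ha, rfl⟩, _, ⟨b, hb, rfl⟩, rfl⟩, hle⟩ := hf d hd
  calc 2 = ∑ x ∈ C, (Finsupp.single a 1 + Finsupp.single b 1 : σ →₀ ℕ) x := by
        simp [Finsupp.single_apply, Finset.sum_add_distrib, Finset.mem_coe.1 ha,
          Finset.mem_coe.1 hb]
    _ ≤ ∑ x ∈ C, d x := Finset.sum_le_sum fun x _ => hle x

theorem prod_X_mem_sq {P : Ideal (MvPolynomial σ R)} {s : Finset σ} {a b : σ}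
    (hab : a ≠ b) (ha : a ∈ s) (hb : b ∈ s) (hXa : X a ∈ P) (hXb : X b ∈ P) :
    ∏ c ∈ s, X c ∈ P ^ 2 := by
  classical
  refine Ideal.mem_of_dvd _ ?_ (sq P ▸ Ideal.mul_mem_mul hXa hXb)
  rw [← Finset.prod_pair hab]
  exact Finset.prod_dvd_prod_of_subset _ _ _ (Finset.insert_subset ha (by simpa using hb))

theorem prod_inter_mul_prod_union_mem_sq [DecidableEq σ]
    {P : Ideal (MvPolynomial σ R)} [P.IsPrime] {H₁ H₂ H₃ : Finset σ}
    (h₁ : ∏ a ∈ H₁, X a ∈ P) (h₂ : ∏ a ∈ H₂, X a ∈ P) (h₃ : ∏ a ∈ H₃, X a ∈ P) :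
    (∏ a ∈ H₁ ∩ H₂ ∩ H₃, X a) * (∏ a ∈ H₁ ∪ H₂ ∪ H₃, X a) ∈ P ^ 2 := by
  obtain ⟨a₁, ha₁, hX₁⟩ := Ideal.IsPrime.prod_mem_iff.1 h₁
  obtain ⟨a₂, ha₂, hX₂⟩ := Ideal.IsPrime.prod_mem_iff.1 h₂
  obtain ⟨a₃, ha₃, hX₃⟩ := Ideal.IsPrime.prod_mem_iff.1 h₃
  by_cases h₁₂ : a₁ = a₂
  · by_cases h₁₃ : a₁ = a₃
    · subst h₁₂ h₁₃
      have hI : a₁ ∈ H₁ ∩ H₂ ∩ H₃ := by simp [ha₁, ha₂, ha₃]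
      have hU : a₁ ∈ H₁ ∪ H₂ ∪ H₃ := by simp [ha₁]
      exact sq P ▸ Ideal.mul_mem_mul (P.mem_of_dvd (Finset.dvd_prod_of_mem _ hI) hX₁)
        (P.mem_of_dvd (Finset.dvd_prod_of_mem _ hU) hX₁)
    · exact Ideal.mul_mem_left _ _ (prod_X_mem_sq h₁₃ (by simp [ha₁]) (by simp [ha₃]) hX₁ hX₃)
  · exact Ideal.mul_mem_left _ _ (prod_X_mem_sq h₁₂ (by simp [ha₁]) (by simp [ha₂]) hX₁ hX₂)

end Semiring

theorem isPrime_span_X_image [CommRing R] [IsDomain R] (C : Set σ) :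
    (Ideal.span (X '' C : Set (MvPolynomial σ R))).IsPrime := by
  classical
  set P := Ideal.span (X '' C : Set (MvPolynomial σ R))
  -- `P` is the kernel of the substitution killing the variables in `C`
  let φ : MvPolynomial σ R →ₐ[R] MvPolynomial σ R := aeval fun a => if a ∈ C then 0 else X a
  have hXφ (a : σ) : X a - φ (X a) ∈ P := by
    by_cases ha : a ∈ C
    · simpa [φ, ha] using (Ideal.subset_span ⟨a, ha, rfl⟩ : X a ∈ P)
    · simp [φ, ha]
  have hφ (f : MvPolynomial σ R) : f - φ f ∈ P := by
    induction f using MvPolynomial.induction_on with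
    | C c => simp [φ]
    | add p q hp hq => simpa [add_sub_add_comm] using P.add_mem hp hq
    | mul_X p a hp =>
      have : p * X a - φ (p * X a) = (p - φ p) * X a + φ p * (X a - φ (X a)) := by
        rw [map_mul]; ring
      rw [this]
      exact P.add_mem (P.mul_mem_right _ hp) (P.mul_mem_left _ (hXφ a))
  have hker : P = RingHom.ker φ := by
    refine le_antisymm (Ideal.span_le.2 ?_) fun f hf => ?_
    · rintro _ ⟨a, ha, rfl⟩
      simp [φ, ha]
    · simpa [RingHom.mem_ker.1 hf] using hφ f
  rw [hker]
  exact RingHom.ker_isPrime _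

section SquarefreeMonomialIdeal

variable {K : Type} [Field K] {E : Set (Finset σ)}

theorem sqfIdeal_eq_span_monomial_image :
    sqfIdeal K E = Ideal.span ((fun u => monomial u (1 : K)) '' (sqfExp '' E)) := by
  simp_rw [sqfIdeal, Set.image_image, prod_X_eq_monomial_sqfExp]

theorem mem_sqfIdeal_sq_iff {f : MvPolynomial σ K} :
    f ∈ sqfIdeal K E ^ 2 ↔ ∀ d ∈ f.support, ∃ F₁ ∈ E, ∃ F₂ ∈ E, sqfExp F₁ + sqfExp F₂ ≤ d := by
  rw [sq, sqfIdeal_eq_span_monomial_image, span_monomial_image_mul_span_monomial_image,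
    mem_ideal_span_monomial_image]
  simp [Set.mem_add]

theorem sqfIdeal_le_span_X_image {C : Finset σ} (hC : IsVertexCover E C) :
    sqfIdeal K E ≤ Ideal.span (X '' (C : Set σ)) := by
  refine Ideal.span_le.2 ?_
  rintro _ ⟨H, hH, rfl⟩
  obtain ⟨a, haH, haC⟩ := Finset.not_disjoint_iff.1 (hC H hH)
  exact Ideal.mem_of_dvd _ (Finset.dvd_prod_of_mem _ haH) (Ideal.subset_span ⟨a, haC, rfl⟩)

variable [DecidableEq σ]

theorem prod_mul_prod_mem_sqfIdeal_sq_iff {A B : Finset σ} (hAB : A ⊆ B) :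
    (∏ a ∈ A, (X a : MvPolynomial σ K)) * ∏ a ∈ B, X a ∈ sqfIdeal K E ^ 2 ↔
      ∃ F₁ ∈ E, ∃ F₂ ∈ E, F₁ ∪ F₂ ⊆ B ∧ F₁ ∩ F₂ ⊆ A := by
  classical
  rw [prod_X_eq_monomial_sqfExp, prod_X_eq_monomial_sqfExp, monomial_mul, one_mul,
    mem_sqfIdeal_sq_iff, support_monomial, if_neg one_ne_zero]
  simp only [Finset.mem_singleton, forall_eq, sqfExp_add_sqfExp_le_sqfExp_add_sqfExp_iff hAB]

theorem prod_inter_mul_prod_union_mem_symb2 {H₁ H₂ H₃ : Finset σ} (h₁ : H₁ ∈ E) (h₂ : H₂ ∈ E)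
    (h₃ : H₃ ∈ E) :
    (∏ a ∈ H₁ ∩ H₂ ∩ H₃, (X a : MvPolynomial σ K)) * (∏ a ∈ H₁ ∪ H₂ ∪ H₃, X a) ∈
      symb2 (sqfIdeal K E) := by
  refine Ideal.mem_iInf.2 fun P => Ideal.mem_iInf.2 fun hP => ?_
  have := hP.1.1
  have hgen {H : Finset σ} (hH : H ∈ E) : ∏ a ∈ H, X a ∈ P :=
    hP.1.2 (Ideal.subset_span ⟨H, hH, rfl⟩)
  exact prod_inter_mul_prod_union_mem_sq (hgen h₁) (hgen h₂) (hgen h₃)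

end SquarefreeMonomialIdeal

end MvPolynomial

end

/-- For a squarefree monomial ideal `I` with minimal generators `{x^H : H ∈ E}`:
`I^(2) = I²` iff for every special triangle made by minimal generators `H₁, H₂, H₃`,
the monomial `x^{H₁∩H₂∩H₃} · x^{H₁∪H₂∪H₃}` lies in `I²`. -/
theorem stmt9 (n : ℕ) (K : Type) [Field K] (E : Set (Finset (Fin n)))
    (hmin : ∀ H ∈ E, ∀ H' ∈ E, H ⊆ H' → H = H') :
    symb2 (sqfIdeal K E) = (sqfIdeal K E) ^ 2 ↔
      ∀ H₁ ∈ E, ∀ H₂ ∈ E, ∀ H₃ ∈ E, ∀ i j k : Fin n,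
        MakeSpecialTriangle H₁ H₂ H₃ i j k →
          (∏ a ∈ H₁ ∩ H₂ ∩ H₃, (X a : MvPolynomial (Fin n) K)) *
            (∏ a ∈ H₁ ∪ H₂ ∪ H₃, (X a : MvPolynomial (Fin n) K)) ∈ (sqfIdeal K E) ^ 2 := by
  constructor
  · intro h H₁ h₁ H₂ h₂ H₃ h₃ i j k _
    exact h ▸ prod_inter_mul_prod_union_mem_symb2 h₁ h₂ h₃
  · intro htri
    refine le_antisymm (fun f hf => mem_sqfIdeal_sq_iff.2 fun d hd => ?_) (sq_le_symb2 _)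
    refine exists_sqfExp_add_sqfExp_le hmin (fun H₁ h₁ H₂ h₂ H₃ h₃ i j k hijk => ?_) fun C hC => ?_
    · exact (prod_mul_prod_mem_sqfIdeal_sq_iff (by grind)).1 (htri H₁ h₁ H₂ h₂ H₃ h₃ i j k hijk)
    · have := isPrime_span_X_image (R := K) (C : Set (Fin n))
      exact two_le_sum_of_mem_span_X_image_sq (symb2_le_sq (sqfIdeal_le_span_X_image hC) hf) d hd
end

section
/- Let G be a finite simple graph on the vertex set [n] and I(G) its edge ideal in S = K[x₁,…,xₙ] over a field K. Then I(G)^(2) = I(G)² if and only if G has no triangle (no cycle of length 3). -/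
open MvPolynomial CategoryTheory

/-- The edge ideal of a graph. -/
noncomputable def edgeIdeal (K : Type) [Field K] {W : Type} (G : SimpleGraph W) :
    Ideal (MvPolynomial W K) :=
  Ideal.span {m : MvPolynomial W K | ∃ a b : W, G.Adj a b ∧ m = X a * X b}

open Pointwise

variable {n : ℕ} (K : Type) [Field K]

private lemma mono_span_mul (A B : Set (Fin n →₀ ℕ)) :
    Ideal.span ((fun d => (monomial d (1:K) : MvPolynomial (Fin n) K)) '' A) *
      Ideal.span ((fun d => (monomial d (1:K) : MvPolynomial (Fin n) K)) '' B) =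
    Ideal.span ((fun d => (monomial d (1:K) : MvPolynomial (Fin n) K)) '' (A + B)) := by
  rw [Ideal.span_mul_span']
  congr 1
  ext m
  constructor
  · intro hm
    rw [Set.mem_mul] at hm
    obtain ⟨x, ⟨a, ha, rfl⟩, y, ⟨b, hb, rfl⟩, rfl⟩ := hm
    exact ⟨a + b, Set.mem_add.mpr ⟨a, ha, b, hb, rfl⟩, by rw [monomial_mul, one_mul]⟩
  · rintro ⟨s, hs, rfl⟩
    obtain ⟨a, ha, b, hb, rfl⟩ := Set.mem_add.mp hs
    exact Set.mem_mul.mpr ⟨_, ⟨a, ha, rfl⟩, _, ⟨b, hb, rfl⟩, by rw [monomial_mul, one_mul]⟩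

private lemma edgeIdeal_eq_mono (G : SimpleGraph (Fin n)) :
    edgeIdeal K G = Ideal.span ((fun d => (monomial d (1:K) : MvPolynomial (Fin n) K)) ''
      {d : Fin n →₀ ℕ | ∃ a b : Fin n, G.Adj a b ∧ d = Finsupp.single a 1 + Finsupp.single b 1}) := by
  rw [edgeIdeal]
  congr 1
  ext m
  constructor
  · rintro ⟨a, b, hab, rfl⟩
    exact ⟨_, ⟨a, b, hab, rfl⟩, by
      rw [show (X a : MvPolynomial (Fin n) K) = monomial (Finsupp.single a 1) 1 from rfl,
        show (X b : MvPolynomial (Fin n) K) = monomial (Finsupp.single b 1) 1 from rfl,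
        monomial_mul, one_mul]⟩
  · rintro ⟨d, ⟨a, b, hab, rfl⟩, rfl⟩
    exact ⟨a, b, hab, by
      rw [show (X a : MvPolynomial (Fin n) K) = monomial (Finsupp.single a 1) 1 from rfl,
        show (X b : MvPolynomial (Fin n) K) = monomial (Finsupp.single b 1) 1 from rfl,
        monomial_mul, one_mul]⟩

private lemma spanX_eq_mono (C : Set (Fin n)) :
    Ideal.span ((X : Fin n → MvPolynomial (Fin n) K) '' C) =
    Ideal.span ((fun d => (monomial d (1:K) : MvPolynomial (Fin n) K)) ''
      ((fun i => Finsupp.single i 1) '' C)) := by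
  rw [Set.image_image]
  rfl

private lemma spanX_isPrime (C : Set (Fin n)) :
    (Ideal.span ((X : Fin n → MvPolynomial (Fin n) K) '' C)).IsPrime := by
  classical
  have key : Ideal.span ((X : Fin n → MvPolynomial (Fin n) K) '' C) =
      RingHom.ker (aeval (R := K) (fun i => if i ∈ C then 0 else (X i : MvPolynomial (Fin n) K))) := by
    set f : Fin n → MvPolynomial (Fin n) K := fun i => if i ∈ C then 0 else X i with hf
    apply le_antisymm
    · rw [Ideal.span_le]
      rintro _ ⟨i, hi, rfl⟩
      simp [RingHom.mem_ker, hf, hi]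
    · intro p hp
      rw [RingHom.mem_ker] at hp
      have main : ∀ q : MvPolynomial (Fin n) K,
          q - aeval f q ∈ Ideal.span ((X : Fin n → MvPolynomial (Fin n) K) '' C) := by
        intro q
        induction q using MvPolynomial.induction_on with
        | C a => rw [aeval_C, algebraMap_eq, sub_self]; exact Submodule.zero_mem _
        | add p q hp hq =>
          have h2 : p + q - aeval f (p + q) = (p - aeval f p) + (q - aeval f q) := by
            rw [map_add]; ring
          rw [h2]; exact Ideal.add_mem _ hp hq
        | mul_X p i hp =>
          rw [map_mul, aeval_X]
          by_cases hi : i ∈ C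
          · rw [hf]
            simp only [if_pos hi, mul_zero, sub_zero]
            exact Ideal.mul_mem_left _ p (Ideal.subset_span ⟨i, hi, rfl⟩)
          · rw [hf]
            simp only [if_neg hi]
            have h2 : p * X i - aeval f p * X i = (p - aeval f p) * X i := by ring
            rw [h2]
            exact Ideal.mul_mem_right _ _ hp
      have := main p
      rw [hp, sub_zero] at this
      exact this
  rw [key]
  exact RingHom.ker_isPrime _

private lemma edgeIdeal_le_spanX {G : SimpleGraph (Fin n)} {C : Set (Fin n)}
    (hC : ∀ a b, G.Adj a b → a ∈ C ∨ b ∈ C) :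
    edgeIdeal K G ≤ Ideal.span ((X : Fin n → MvPolynomial (Fin n) K) '' C) := by
  rw [edgeIdeal, Ideal.span_le]
  rintro m ⟨a, b, hab, rfl⟩
  rcases hC a b hab with h | h
  · exact Ideal.mul_mem_right _ _ (Ideal.subset_span ⟨a, h, rfl⟩)
  · exact Ideal.mul_mem_left _ _ (Ideal.subset_span ⟨b, h, rfl⟩)

private lemma fdegree_mono {f g : Fin n →₀ ℕ} (h : f ≤ g) : f.degree ≤ g.degree := by
  obtain ⟨h', rfl⟩ := le_iff_exists_add.mp h
  rw [Finsupp.degree_eq_weight_one, map_add]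
  exact le_self_add

private lemma fdegree_add (f g : Fin n →₀ ℕ) : (f + g).degree = f.degree + g.degree := by
  rw [Finsupp.degree_eq_weight_one]
  exact map_add _ f g

private lemma fdegree_single (a : Fin n) : (Finsupp.single a 1).degree = 1 := by
  rw [Finsupp.degree_eq_weight_one]
  simp [Finsupp.weight_apply, Finsupp.sum_single_index]

private lemma fdegree_pair (a b : Fin n) :
    (Finsupp.single a 1 + Finsupp.single b 1).degree = 2 := by
  rw [fdegree_add, fdegree_single, fdegree_single]


lemma quadA {n : ℕ} (d : Fin n →₀ ℕ) (a b : Fin n) (hab : a ≠ b)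
    (ha : 2 ≤ d a) (hb : 2 ≤ d b) :
    (Finsupp.single a 1 + Finsupp.single b 1) + (Finsupp.single a 1 + Finsupp.single b 1) ≤ d := by
  rw [Finsupp.le_def]
  intro v
  simp only [Finsupp.add_apply, Finsupp.single_apply]
  by_cases h1 : a = v
  · have := h1 ▸ ha
    have h2 : ¬ b = v := fun h => hab (h1.trans h.symm)
    simp [h1, h2]; omega
  · by_cases h2 : b = v
    · have := h2 ▸ hb
      simp [h1, h2]; omega
    · simp [h1, h2]

lemma quadB {n : ℕ} (d : Fin n →₀ ℕ) (p q y : Fin n) (h1 : p ≠ q) (h2 : p ≠ y) (h3 : q ≠ y)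
    (hp : 2 ≤ d p) (hq : 1 ≤ d q) (hy : 1 ≤ d y) :
    (Finsupp.single p 1 + Finsupp.single q 1) + (Finsupp.single p 1 + Finsupp.single y 1) ≤ d := by
  rw [Finsupp.le_def]
  intro v
  simp only [Finsupp.add_apply, Finsupp.single_apply]
  by_cases hpv : p = v
  · have := hpv ▸ hp
    have hqv : ¬ q = v := fun h => h1 (hpv.trans h.symm)
    have hyv : ¬ y = v := fun h => h2 (hpv.trans h.symm)
    simp [hpv, hqv, hyv]; omega
  · by_cases hqv : q = v
    · have := hqv ▸ hq
      have hyv : ¬ y = v := fun h => h3 (hqv.trans h.symm)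
      simp [hpv, hqv, hyv]; omega
    · by_cases hyv : y = v
      · have := hyv ▸ hy
        simp [hpv, hqv, hyv]; omega
      · simp [hpv, hqv, hyv]

lemma quadC {n : ℕ} (d : Fin n →₀ ℕ) (a b x y : Fin n)
    (h1 : a ≠ b) (h2 : a ≠ x) (h3 : a ≠ y) (h4 : b ≠ x) (h5 : b ≠ y) (h6 : x ≠ y)
    (ha : 1 ≤ d a) (hb : 1 ≤ d b) (hx : 1 ≤ d x) (hy : 1 ≤ d y) :
    (Finsupp.single a 1 + Finsupp.single b 1) + (Finsupp.single x 1 + Finsupp.single y 1) ≤ d := by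
  rw [Finsupp.le_def]
  intro v
  simp only [Finsupp.add_apply, Finsupp.single_apply]
  by_cases hav : a = v
  · have := hav ▸ ha
    have hbv : ¬ b = v := fun h => h1 (hav.trans h.symm)
    have hxv : ¬ x = v := fun h => h2 (hav.trans h.symm)
    have hyv : ¬ y = v := fun h => h3 (hav.trans h.symm)
    simp [hav, hbv, hxv, hyv]; omega
  · by_cases hbv : b = v
    · have := hbv ▸ hb
      have hxv : ¬ x = v := fun h => h4 (hbv.trans h.symm)
      have hyv : ¬ y = v := fun h => h5 (hbv.trans h.symm)
      simp [hav, hbv, hxv, hyv]; omega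
    · by_cases hxv : x = v
      · have := hxv ▸ hx
        have hyv : ¬ y = v := fun h => h6 (hxv.trans h.symm)
        simp [hav, hbv, hxv, hyv]; omega
      · by_cases hyv : y = v
        · have := hyv ▸ hy
          simp [hav, hbv, hxv, hyv]; omega
        · simp [hav, hbv, hxv, hyv]

lemma combi {n : ℕ} (G : SimpleGraph (Fin n))
    (hTF : ¬∃ a b c : Fin n, G.Adj a b ∧ G.Adj b c ∧ G.Adj a c) (d : Fin n →₀ ℕ)
    (H : ∀ C : Set (Fin n), (∀ a b, G.Adj a b → a ∈ C ∨ b ∈ C) →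
      ∃ i ∈ C, ∃ j ∈ C, Finsupp.single i 1 + Finsupp.single j 1 ≤ d) :
    ∃ a b c e : Fin n, G.Adj a b ∧ G.Adj c e ∧
      (Finsupp.single a 1 + Finsupp.single b 1) + (Finsupp.single c 1 + Finsupp.single e 1) ≤ d := by
  classical
  by_contra hno
  push_neg at hno
  have pair1 : ∀ i j : Fin n, Finsupp.single i 1 + Finsupp.single j 1 ≤ d → 1 ≤ d i ∧ 1 ≤ d j := by
    intro i j h
    have hi := Finsupp.le_def.mp h i
    have hj := Finsupp.le_def.mp h j
    rcases eq_or_ne i j with rfl | hne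
    · simp [Finsupp.single_apply] at hi
      omega
    · simp [Finsupp.single_apply, hne, hne.symm] at hi hj
      exact ⟨hi, hj⟩
  have useH : ∀ u : Fin n, d u ≤ 1 →
      (∀ x y, G.Adj x y → 1 ≤ d x → 1 ≤ d y → x = u ∨ y = u) → False := by
    intro u hu hstar
    obtain ⟨i, hi, j, hj, hij⟩ := H ({v | d v = 0} ∪ {u}) (by
      intro x y hxy
      rcases Nat.eq_zero_or_pos (d x) with h0 | h1
      · exact Or.inl (Or.inl h0)
      rcases Nat.eq_zero_or_pos (d y) with h0 | h1'
      · exact Or.inr (Or.inl h0)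
      rcases hstar x y hxy h1 h1' with rfl | rfl
      · exact Or.inl (Or.inr rfl)
      · exact Or.inr (Or.inr rfl))
    have hp1 := (pair1 i j hij).1
    have hp2 := (pair1 i j hij).2
    have hiu : i = u := by
      rcases hi with hi | hi
      · have : d i = 0 := hi; omega
      · exact hi
    have hju : j = u := by
      rcases hj with hj | hj
      · have : d j = 0 := hj; omega
      · exact hj
    rw [hiu, hju] at hij
    have h2 := Finsupp.le_def.mp hij u
    simp [Finsupp.single_apply] at h2
    omega
  by_cases hE : ∃ x y, G.Adj x y ∧ 1 ≤ d x ∧ 1 ≤ d y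
  · obtain ⟨a, b, hab, hda, hdb⟩ := hE
    have hne := hab.ne
    have hd2 : ¬(2 ≤ d a ∧ 2 ≤ d b) := by
      rintro ⟨h1, h2⟩
      exact hno a b a b hab hab (quadA d a b hne h1 h2)
    have half : ∀ p q : Fin n, G.Adj p q → 2 ≤ d p → 1 ≤ d q →
        ∀ x y, G.Adj x y → 1 ≤ d x → 1 ≤ d y → x = q ∨ y = q := by
      intro p q hpq h2p h1q x y hxy hx hy
      by_contra hc
      push_neg at hc
      obtain ⟨hxq, hyq⟩ := hc
      have hpq' := hpq.ne
      have hxy' := hxy.ne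
      rcases eq_or_ne x p with hxp | hxp
      · have hpy : G.Adj p y := hxp ▸ hxy
        exact hno p q p y hpq hpy
          (quadB d p q y hpq' (fun h => hxy' (hxp.trans h)) (fun h => hyq h.symm) h2p h1q hy)
      rcases eq_or_ne y p with hyp | hyp
      · have hpx : G.Adj p x := (hyp ▸ hxy).symm
        exact hno p q p x hpq hpx
          (quadB d p q x hpq' (fun h => hxy' (h.symm.trans hyp.symm))
            (fun h => hxq h.symm) h2p h1q hx)
      · exact hno p q x y hpq hxy
          (quadC d p q x y hpq' (Ne.symm hxp) (Ne.symm hyp) (Ne.symm hxq) (Ne.symm hyq) hxy'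
            (by omega) h1q hx hy)
    by_cases h2a : 2 ≤ d a
    · have hdb1 : d b ≤ 1 := by
        by_contra hh
        push_neg at hh
        exact hd2 ⟨h2a, hh⟩
      exact useH b hdb1 (half a b hab h2a hdb)
    · by_cases h2b : 2 ≤ d b
      · exact useH a (by omega) (half b a hab.symm h2b hda)
      · by_cases hsa : ∀ x y, G.Adj x y → 1 ≤ d x → 1 ≤ d y → x = a ∨ y = a
        · exact useH a (by omega) hsa
        · by_cases hsb : ∀ x y, G.Adj x y → 1 ≤ d x → 1 ≤ d y → x = b ∨ y = b
          · exact useH b (by omega) hsb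
          · push_neg at hsa hsb
            obtain ⟨x, y, hxy, hx, hy, hxa, hya⟩ := hsa
            obtain ⟨x', y', hxy', hx', hy', hxb, hyb⟩ := hsb
            have hCb : ∃ c, G.Adj b c ∧ c ≠ a ∧ 1 ≤ d c := by
              rcases eq_or_ne x b with hxb2 | hxb2
              · exact ⟨y, hxb2 ▸ hxy, hya, hy⟩
              rcases eq_or_ne y b with hyb2 | hyb2
              · exact ⟨x, (hyb2 ▸ hxy).symm, hxa, hx⟩
              · exact absurd
                  (quadC d a b x y hne (Ne.symm hxa) (Ne.symm hya) (Ne.symm hxb2)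
                    (Ne.symm hyb2) hxy.ne hda hdb hx hy)
                  (hno a b x y hab hxy)
            have hCa : ∃ c', G.Adj a c' ∧ c' ≠ b ∧ 1 ≤ d c' := by
              rcases eq_or_ne x' a with hxa2 | hxa2
              · exact ⟨y', hxa2 ▸ hxy', hyb, hy'⟩
              rcases eq_or_ne y' a with hya2 | hya2
              · exact ⟨x', (hya2 ▸ hxy').symm, hxb, hx'⟩
              · exact absurd
                  (quadC d a b x' y' hne (Ne.symm hxa2) (Ne.symm hya2) (Ne.symm hxb)
                    (Ne.symm hyb) hxy'.ne hda hdb hx' hy')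
                  (hno a b x' y' hab hxy')
            obtain ⟨c, hbc, hca, hdc⟩ := hCb
            obtain ⟨c', hac', hc'b, hdc'⟩ := hCa
            rcases eq_or_ne c c' with rfl | hcc
            · exact hTF ⟨a, b, c, hab, hbc, hac'⟩
            · exact absurd
                (quadC d b c a c' hbc.ne (Ne.symm hne) (Ne.symm hc'b) hca hcc hac'.ne
                  hdb hdc hda hdc')
                (hno b c a c' hbc hac')
  · obtain ⟨i, hi, j, hj, hij⟩ := H {v | d v = 0} (by
      intro x y hxy
      by_contra hc
      push_neg at hc
      have h1 : ¬ d x = 0 := hc.1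
      have h2 : ¬ d y = 0 := hc.2
      exact hE ⟨x, y, hxy, by omega, by omega⟩)
    have : d i = 0 := hi
    have := (pair1 i j hij).1
    omega


/-- For the edge ideal of a graph `G`: `I(G)^(2) = I(G)²` iff `G` has no triangle. -/
theorem stmt11 (n : ℕ) (K : Type) [Field K] (G : SimpleGraph (Fin n)) :
    symb2 (edgeIdeal K G) = (edgeIdeal K G) ^ 2 ↔
      ¬ ∃ a b c : Fin n, G.Adj a b ∧ G.Adj b c ∧ G.Adj a c := by
  classical
  constructor
  · intro h
    rintro ⟨a, b, c, hab, hbc, hac⟩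
    have hmem : (X a * X b * X c : MvPolynomial (Fin n) K) ∈ symb2 (edgeIdeal K G) := by
      rw [symb2, Submodule.mem_iInf]
      intro Q
      rw [Submodule.mem_iInf]
      intro hQ
      have hIQ : edgeIdeal K G ≤ Q := hQ.1.2
      have hprime : Q.IsPrime := hQ.1.1
      have h1 : (X a * X b : MvPolynomial (Fin n) K) ∈ Q :=
        hIQ (Ideal.subset_span ⟨a, b, hab, rfl⟩)
      have h2 : (X b * X c : MvPolynomial (Fin n) K) ∈ Q :=
        hIQ (Ideal.subset_span ⟨b, c, hbc, rfl⟩)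
      have h3 : (X a * X c : MvPolynomial (Fin n) K) ∈ Q :=
        hIQ (Ideal.subset_span ⟨a, c, hac, rfl⟩)
      rw [pow_two]
      rcases hprime.mem_or_mem h1 with ha | hb
      · rcases hprime.mem_or_mem h2 with hb | hc
        · exact Ideal.mul_mem_right _ _ (Ideal.mul_mem_mul ha hb)
        · have he : (X a * X b * X c : MvPolynomial (Fin n) K) = X a * X c * X b := by ring
          rw [he]
          exact Ideal.mul_mem_right _ _ (Ideal.mul_mem_mul ha hc)
      · rcases hprime.mem_or_mem h3 with ha | hc
        · exact Ideal.mul_mem_right _ _ (Ideal.mul_mem_mul ha hb)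
        · have he : (X a * X b * X c : MvPolynomial (Fin n) K) = X b * X c * X a := by ring
          rw [he]
          exact Ideal.mul_mem_right _ _ (Ideal.mul_mem_mul hb hc)
    rw [h, pow_two, edgeIdeal_eq_mono, mono_span_mul] at hmem
    have hm2 : (X a * X b * X c : MvPolynomial (Fin n) K)
        = monomial (Finsupp.single a 1 + Finsupp.single b 1 + Finsupp.single c 1) (1:K) := by
      rw [show (X a : MvPolynomial (Fin n) K) = monomial (Finsupp.single a 1) 1 from rfl,
        show (X b : MvPolynomial (Fin n) K) = monomial (Finsupp.single b 1) 1 from rfl,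
        show (X c : MvPolynomial (Fin n) K) = monomial (Finsupp.single c 1) 1 from rfl,
        monomial_mul, monomial_mul, one_mul, one_mul]
    have hsupp : (Finsupp.single a 1 + Finsupp.single b 1 + Finsupp.single c 1)
        ∈ (X a * X b * X c : MvPolynomial (Fin n) K).support := by
      rw [hm2, support_monomial, if_neg one_ne_zero]
      exact Finset.mem_singleton_self _
    obtain ⟨s, hs, hle⟩ := mem_ideal_span_monomial_image.mp hmem _ hsupp
    obtain ⟨s1, hs1, s2, hs2, rfl⟩ := Set.mem_add.mp hs
    obtain ⟨a1, b1, _, rfl⟩ := hs1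
    obtain ⟨a2, b2, _, rfl⟩ := hs2
    have h4 : ((Finsupp.single a1 1 + Finsupp.single b1 1) +
        (Finsupp.single a2 1 + Finsupp.single b2 1)).degree = 4 := by
      rw [fdegree_add, fdegree_pair, fdegree_pair]
    have h3' : (Finsupp.single a 1 + Finsupp.single b 1 + Finsupp.single c 1).degree = 3 := by
      rw [fdegree_add, fdegree_pair, fdegree_single]
    have := fdegree_mono hle
    omega
  · intro hTF
    apply le_antisymm
    · intro z hz
      rw [pow_two, edgeIdeal_eq_mono, mono_span_mul, mem_ideal_span_monomial_image]
      intro d hd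
      have H : ∀ C : Set (Fin n), (∀ a b, G.Adj a b → a ∈ C ∨ b ∈ C) →
          ∃ i ∈ C, ∃ j ∈ C, Finsupp.single i 1 + Finsupp.single j 1 ≤ d := by
        intro C hC
        have hp : (Ideal.span ((X : Fin n → MvPolynomial (Fin n) K) '' C)).IsPrime :=
          spanX_isPrime K C
        obtain ⟨Q, hQ, hQle⟩ := Ideal.exists_minimalPrimes_le (edgeIdeal_le_spanX K hC)
        have hzQ : z ∈ Q ^ 2 := by
          rw [symb2, Submodule.mem_iInf] at hz
          have := hz Q
          rw [Submodule.mem_iInf] at this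
          exact this hQ
        have h1 : z ∈ (Ideal.span ((X : Fin n → MvPolynomial (Fin n) K) '' C)) ^ 2 := by
          refine (?_ : Q ^ 2 ≤ _) hzQ
          rw [pow_two, pow_two]
          exact Ideal.mul_mono hQle hQle
        rw [spanX_eq_mono, pow_two, mono_span_mul, mem_ideal_span_monomial_image] at h1
        obtain ⟨s, hs, hle⟩ := h1 d hd
        obtain ⟨s1, hs1, s2, hs2, rfl⟩ := Set.mem_add.mp hs
        obtain ⟨i, hi, rfl⟩ := hs1
        obtain ⟨j, hj, rfl⟩ := hs2
        exact ⟨i, hi, j, hj, hle⟩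
      obtain ⟨a, b, c, e, hab, hce, hle⟩ := combi G hTF d H
      exact ⟨_, Set.mem_add.mpr ⟨_, ⟨a, b, hab, rfl⟩, _, ⟨c, e, hce, rfl⟩, rfl⟩, hle⟩
    · rw [symb2]
      refine le_iInf fun Q => le_iInf fun hQ => ?_
      rw [pow_two, pow_two]
      exact Ideal.mul_mono hQ.1.2 hQ.1.2
end

section
/- Let I be a squarefree monomial ideal in S = K[x₁,…,xₙ] over a field K with dim S/I ≥ 1. If x·I ∩ (I² : x) ⊆ I² for every variable x ∈ {x₁,…,xₙ}, then the maximal ideal m = (x₁,…,xₙ) is not an associated prime of S/I². -/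
open MvPolynomial CategoryTheory

/-!
Suppose `m = (I² : g)` with `g ∉ I²`. Since `I²` is a monomial ideal, some monomial `x^d` of `g`
satisfies `x^d ∉ I²` and `x_v x^d ∈ I²` for every variable. As `dim S/I ≥ 1`, `I ≠ m`, so some
variable `x_v ∉ I`. Write `x_v x^d = x^{H₁} x^{H₂} u` with `H₁, H₂ ∈ E`; because `x^d ∉ I²`, the
variable `x_v` divides, say, `x^{H₁}`, and because `x_v ∉ I`, `H₁` has a second vertex `w`. Then
`x^d ∈ x_w I ∩ (I² : x_w) ⊆ I²`, a contradiction.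
-/

lemma exists_notMem_forall_mul_mem_of_isAssociatedPrime {R : Type*} [CommRing R]
    [IsNoetherianRing R] {P J : Ideal R} (h : IsAssociatedPrime P (R ⧸ J)) :
    ∃ g ∉ J, ∀ r ∈ P, r * g ∈ J := by
  obtain ⟨hP, x, rfl⟩ := isAssociatedPrime_iff.1 h
  obtain ⟨g, rfl⟩ := Ideal.Quotient.mk_surjective x
  refine ⟨g, fun hg => hP.ne_top ?_, fun r hr => ?_⟩
  · rw [Ideal.Quotient.eq_zero_iff_mem.2 hg, Submodule.colon_singleton_zero]
  · rw [Submodule.mem_colon_singleton, Submodule.mem_bot] at hr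
    exact Ideal.Quotient.eq_zero_iff_mem.1 hr

lemma ringKrullDim_quotient_nonpos_of_le {R : Type*} [CommRing R] {m I : Ideal R} [m.IsMaximal]
    (h : m ≤ I) : ringKrullDim (R ⧸ I) ≤ 0 := by
  let := Ideal.Quotient.field m
  exact (ringKrullDim_le_of_surjective _ (Ideal.Quotient.factor_surjective h)).trans
    (ringKrullDim_eq_zero_of_field _).le

/-- The exponent vector of the squarefree monomial `x^H = ∏_{a ∈ H} x_a`. -/
noncomputable def sqfExponent {σ : Type*} (H : Finset σ) : σ →₀ ℕ :=
  ∑ a ∈ H, Finsupp.single a 1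

section Squarefree

open Finsupp

variable {σ : Type*}

lemma sqfExponent_apply_of_notMem {H : Finset σ} {v : σ} (hv : v ∉ H) : sqfExponent H v = 0 := by
  classical
  simp [sqfExponent, finsetSum_apply, single_apply, hv]

lemma sqfExponent_mono {H H' : Finset σ} (h : H ⊆ H') : sqfExponent H ≤ sqfExponent H' :=
  Finset.sum_le_sum_of_subset h

lemma sqfExponent_singleton (v : σ) : sqfExponent {v} = single v 1 :=
  Finset.sum_singleton _ _

lemma single_add_sqfExponent_erase [DecidableEq σ] {H : Finset σ} {v : σ} (hv : v ∈ H) :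
    single v 1 + sqfExponent (H.erase v) = sqfExponent H :=
  Finset.add_sum_erase H _ hv

lemma single_le_sqfExponent {H : Finset σ} {w : σ} (hw : w ∈ H) : single w 1 ≤ sqfExponent H :=
  Finset.single_le_sum (f := fun a => single a 1) (fun _ _ => by simp) hw

lemma le_of_le_single_add {f d : σ →₀ ℕ} {v : σ} (hv : f v = 0) (h : f ≤ single v 1 + d) :
    f ≤ d := by
  refine le_def.2 fun z => ?_
  by_cases hz : z = v
  · simp [hz, hv]
  · simpa [single_apply, Ne.symm hz] using le_def.1 h z

lemma single_add_sqfExponent_le {H₁ H₂ : Finset σ} {v w : σ} {d : σ →₀ ℕ} (hv : v ∈ H₁)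
    (hw : w ∈ H₁) (hwv : w ≠ v) (h : sqfExponent H₁ + sqfExponent H₂ ≤ single v 1 + d) :
    single w 1 + sqfExponent H₂ ≤ d := by
  classical
  rw [← single_add_sqfExponent_erase hv, add_assoc] at h
  exact (add_le_add_left (single_le_sqfExponent (Finset.mem_erase.2 ⟨hwv, hw⟩)) _).trans
    (le_of_add_le_add_left h)

end Squarefree

namespace MvPolynomial

section MonomialIdeal

variable {σ R : Type*} [CommSemiring R] [Nontrivial R] {T : Set (σ →₀ ℕ)}

lemma monomial_one_mem_span_monomial_image_iff {d : σ →₀ ℕ} :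
    monomial d (1 : R) ∈ Ideal.span ((monomial · 1) '' T) ↔ ∃ s ∈ T, s ≤ d := by
  classical
  simp [mem_ideal_span_monomial_image, support_monomial]

lemma monomial_one_mem_of_mem_support {p : MvPolynomial σ R}
    (hp : p ∈ Ideal.span ((monomial · 1) '' T)) {d : σ →₀ ℕ} (hd : d ∈ p.support) :
    monomial d (1 : R) ∈ Ideal.span ((monomial · 1) '' T) :=
  monomial_one_mem_span_monomial_image_iff.2 (mem_ideal_span_monomial_image.1 hp d hd)

lemma exists_monomial_notMem_forall_X_mul_mem {p : MvPolynomial σ R}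
    (hp : p ∉ Ideal.span ((monomial · 1) '' T))
    (hX : ∀ v, X v * p ∈ Ideal.span ((monomial · 1) '' T)) :
    ∃ d, monomial d (1 : R) ∉ Ideal.span ((monomial · 1) '' T) ∧
      ∀ v, X v * monomial d (1 : R) ∈ Ideal.span ((monomial · 1) '' T) := by
  obtain ⟨d, hd, hdT⟩ : ∃ d ∈ p.support, ¬ ∃ s ∈ T, s ≤ d := by
    simpa [mem_ideal_span_monomial_image] using hp
  refine ⟨d, monomial_one_mem_span_monomial_image_iff.not.2 hdT, fun v => ?_⟩
  rw [← pow_one (X v), ← monomial_single_add]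
  exact monomial_one_mem_of_mem_support (hX v)
    (by rwa [mem_support_iff, coeff_X_mul, ← mem_support_iff])

end MonomialIdeal

lemma mxIdeal_eq_ker_constantCoeff (K : Type) [Field K] (σ : Type) :
    mxIdeal K σ = RingHom.ker (constantCoeff : MvPolynomial σ K →+* K) := by
  ext p
  rw [mxIdeal, ← pow_one (Ideal.span _), ← idealOfVars, mem_pow_idealOfVars_iff', RingHom.mem_ker,
    constantCoeff_eq]
  simp [Finsupp.degree_eq_zero_iff]

instance mxIdeal_isMaximal (K : Type) [Field K] (σ : Type) : (mxIdeal K σ).IsMaximal := by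
  rw [mxIdeal_eq_ker_constantCoeff]
  exact RingHom.ker_isMaximal_of_surjective _ fun k => ⟨C k, constantCoeff_C σ k⟩

lemma exists_X_notMem_of_one_le_ringKrullDim {K σ : Type} [Field K]
    {I : Ideal (MvPolynomial σ K)}
    (h : ((1 : ℕ∞) : WithBot ℕ∞) ≤ ringKrullDim (MvPolynomial σ K ⧸ I)) : ∃ v, X v ∉ I := by
  by_contra! hX
  have hle : mxIdeal K σ ≤ I := Ideal.span_le.2 (Set.range_subset_iff.2 hX)
  exact absurd (h.trans (ringKrullDim_quotient_nonpos_of_le hle)) (by decide)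

section SquarefreeIdeal

variable {K σ : Type} [Field K] {E : Set (Finset σ)}

lemma prod_X_eq_monomial_sqfExponent (H : Finset σ) :
    ∏ a ∈ H, (X a : MvPolynomial σ K) = monomial (sqfExponent H) 1 :=
  (monomial_sum_one H _).symm

lemma sqfIdeal_eq_span_monomial :
    sqfIdeal K E = Ideal.span ((monomial · 1) '' (sqfExponent '' E)) := by
  simp only [sqfIdeal, Set.image_image, prod_X_eq_monomial_sqfExponent]

lemma sqfIdeal_sq_eq_span_monomial :
    sqfIdeal K E ^ 2 = Ideal.span ((monomial · 1) ''
      Set.image2 (· + ·) (sqfExponent '' E) (sqfExponent '' E)) := by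
  rw [pow_two, sqfIdeal_eq_span_monomial, Ideal.span_mul_span', ← Set.image2_mul,
    Set.image2_image_left, Set.image2_image_right, Set.image_image2]
  simp only [monomial_mul, one_mul]

lemma monomial_mem_sqfIdeal_iff {d : σ →₀ ℕ} :
    monomial d (1 : K) ∈ sqfIdeal K E ↔ ∃ H ∈ E, sqfExponent H ≤ d := by
  simp [sqfIdeal_eq_span_monomial, monomial_one_mem_span_monomial_image_iff]

lemma monomial_mem_sqfIdeal_sq_iff {d : σ →₀ ℕ} :
    monomial d (1 : K) ∈ sqfIdeal K E ^ 2 ↔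
      ∃ H₁ ∈ E, ∃ H₂ ∈ E, sqfExponent H₁ + sqfExponent H₂ ≤ d := by
  simp [sqfIdeal_sq_eq_span_monomial, monomial_one_mem_span_monomial_image_iff, Set.mem_add]

lemma exists_monomial_mem_span_X_mul_sqfIdeal {v : σ} {d : σ →₀ ℕ}
    (hd : monomial d (1 : K) ∉ sqfIdeal K E ^ 2)
    (hvd : X v * monomial d (1 : K) ∈ sqfIdeal K E ^ 2)
    (hv : (X v : MvPolynomial σ K) ∉ sqfIdeal K E) :
    ∃ w, monomial d (1 : K) ∈ Ideal.span {X w} * sqfIdeal K E := by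
  classical
  rw [← pow_one (X v), ← monomial_single_add, monomial_mem_sqfIdeal_sq_iff] at hvd
  obtain ⟨H₁, h₁, H₂, h₂, hle⟩ := hvd
  have hvH : v ∈ H₁ ∨ v ∈ H₂ := by
    by_contra! hvH
    refine hd (monomial_mem_sqfIdeal_sq_iff.2 ⟨H₁, h₁, H₂, h₂, le_of_le_single_add ?_ hle⟩)
    simp [sqfExponent_apply_of_notMem hvH.1, sqfExponent_apply_of_notMem hvH.2]
  wlog hv₁ : v ∈ H₁ generalizing H₁ H₂
  · exact this H₂ h₂ H₁ h₁ (add_comm (sqfExponent H₁) _ ▸ hle) hvH.symm (hvH.resolve_left hv₁)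
  obtain ⟨w, hw, hwv⟩ : ∃ w ∈ H₁, w ≠ v := by
    by_contra! hH₁
    refine hv ?_
    rw [← pow_one (X v), X_pow_eq_monomial, monomial_mem_sqfIdeal_iff]
    exact ⟨H₁, h₁, sqfExponent_singleton v ▸ sqfExponent_mono fun a ha => by simp [hH₁ a ha]⟩
  obtain ⟨c, rfl⟩ := le_iff_exists_add.1 (single_add_sqfExponent_le hv₁ hw hwv hle)
  refine ⟨w, ?_⟩
  rw [add_assoc, monomial_single_add, pow_one, ← one_mul (1 : K), ← monomial_mul,
    ← prod_X_eq_monomial_sqfExponent]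
  exact Ideal.mul_mem_mul (Ideal.mem_span_singleton_self _)
    (Ideal.mul_mem_right _ _ (Ideal.subset_span ⟨H₂, h₂, rfl⟩))

end SquarefreeIdeal

end MvPolynomial

/-- If `I` is a squarefree monomial ideal with `dim S/I ≥ 1` and
`x·I ∩ (I² : x) ⊆ I²` for every variable `x`, then the maximal ideal
`m = (x₁, …, xₙ)` is not an associated prime of `S/I²`. -/
theorem stmt13 (n : ℕ) (K : Type) [Field K] (E : Set (Finset (Fin n)))
    (hdim : ((1 : ℕ∞) : WithBot ℕ∞) ≤
      ringKrullDim (MvPolynomial (Fin n) K ⧸ sqfIdeal K E))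
    (hcolon : ∀ v : Fin n,
      Ideal.span {(X v : MvPolynomial (Fin n) K)} * sqfIdeal K E ⊓
        Submodule.colon ((sqfIdeal K E) ^ 2) (Ideal.span {(X v : MvPolynomial (Fin n) K)}) ≤
      (sqfIdeal K E) ^ 2) :
    ¬ IsAssociatedPrime (mxIdeal K (Fin n))
        (MvPolynomial (Fin n) K ⧸ (sqfIdeal K E) ^ 2) := by
  intro hass
  obtain ⟨v, hv⟩ := exists_X_notMem_of_one_le_ringKrullDim hdim
  obtain ⟨g, hg, hmg⟩ := exists_notMem_forall_mul_mem_of_isAssociatedPrime hass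
  have hXg : ∀ u, X u * g ∈ sqfIdeal K E ^ 2 := fun u => hmg _ (Ideal.subset_span ⟨u, rfl⟩)
  rw [sqfIdeal_sq_eq_span_monomial] at hg hXg
  obtain ⟨d, hd, hXd⟩ := exists_monomial_notMem_forall_X_mul_mem hg hXg
  rw [← sqfIdeal_sq_eq_span_monomial] at hd hXd
  obtain ⟨w, hw⟩ := exists_monomial_mem_span_X_mul_sqfIdeal hd (hXd v) hv
  have hdw : monomial d (1 : K) * X w ∈ sqfIdeal K E ^ 2 := by
    rw [mul_comm]; exact hXd w
  exact hd (hcolon w ⟨hw, Submodule.mem_colon_span_singleton.2 hdw⟩)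
end
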